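/- Let X be a normal random variable with mean (r − σ²/2)t and variance σ²t, where σ > 0, r ≥ 0, t > 0. Let H > S₀ > 0 and suppose ε ∈ (0, 1/2) satisfies log(1/(2ε)) > (4/5)(1 + 2r/σ²) log(H/S₀) and t < 8(log(H/S₀))²/(25σ² log(1/(2ε))). Then E[e^X · 1{e^X ≥ H/S₀}] < ε·e^{rt}. -/

import Mathlib

/-!
Exponential tilting: `eˣ` times the `N(m, V)` density is `e^(m + V/2)` times the `N(m + V, V)`
density, so the integral is `e^(rt)` times the probability that `N((r + σ²/2)t, σ²t)` exceeds
`b = log(H/S₀)`. Beyond `b` the density of `N(m, V)` is at most `e^(-(b - m)²/(2V))` times that of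
`N(b, V)`, which gives the tail bound `e^(-(b - m)²/(2V)) / 2`. The hypotheses on `ε` and `t` force
the tilted mean below `b/5` and `2V log(1/(2ε)) < (4b/5)²`, so this bound is below `ε`.
-/

open MeasureTheory ProbabilityTheory Real Set
open scoped NNReal

namespace ProbabilityTheory

variable {μ : ℝ} {v : ℝ≥0}

lemma gaussianReal_real_eq_integral (μ : ℝ) (hv : v ≠ 0) (s : Set ℝ) :
    (gaussianReal μ v).real s = ∫ x in s, gaussianPDFReal μ v x := by
  rw [measureReal_def, gaussianReal_apply_eq_integral μ hv,
    ENNReal.toReal_ofReal (integral_nonneg (gaussianPDFReal_nonneg μ v))]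

lemma gaussianReal_real_Ici_self (μ : ℝ) (hv : v ≠ 0) :
    (gaussianReal μ v).real (Ici μ) = 1 / 2 := by
  have := nullSingletonClass_gaussianReal (μ := μ) hv
  have hsymm : (gaussianReal μ v).real (Iic μ) = (gaussianReal μ v).real (Ici μ) := by
    have hmap := gaussianReal_map_const_sub (μ := μ) (v := v) (2 * μ)
    rw [show 2 * μ - μ = μ by ring] at hmap
    have hpre : (2 * μ - ·) ⁻¹' Iic μ = Ici μ := by
      ext x
      simp only [mem_preimage, mem_Iic, mem_Ici]
      constructor <;> intro <;> linarith
    rw [← hpre, ← map_measureReal_apply (by fun_prop) measurableSet_Iic, hmap]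
  have hcompl : (gaussianReal μ v).real (Iic μ) + (gaussianReal μ v).real (Ioi μ) = 1 := by
    rw [← compl_Iic, measureReal_add_measureReal_compl measurableSet_Iic, probReal_univ]
  rw [measureReal_congr Ioi_ae_eq_Ici] at hcompl
  linarith

lemma gaussianPDFReal_le_exp_mul_gaussianPDFReal {b x : ℝ} (hμb : μ ≤ b) (hbx : b ≤ x) :
    gaussianPDFReal μ v x ≤ exp (-(b - μ) ^ 2 / (2 * v)) * gaussianPDFReal b v x := by
  simp only [gaussianPDFReal]
  rw [mul_left_comm, ← exp_add, ← add_div]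
  gcongr
  nlinarith [mul_nonneg (sub_nonneg.2 hbx) (sub_nonneg.2 hμb)]

lemma gaussianReal_real_Ici_le (hv : v ≠ 0) {b : ℝ} (hμb : μ ≤ b) :
    (gaussianReal μ v).real (Ici b) ≤ exp (-(b - μ) ^ 2 / (2 * v)) / 2 := calc
  (gaussianReal μ v).real (Ici b) = ∫ x in Ici b, gaussianPDFReal μ v x :=
    gaussianReal_real_eq_integral μ hv _
  _ ≤ ∫ x in Ici b, exp (-(b - μ) ^ 2 / (2 * v)) * gaussianPDFReal b v x :=
    setIntegral_mono_on (integrable_gaussianPDFReal μ v).integrableOn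
      ((integrable_gaussianPDFReal b v).const_mul _).integrableOn measurableSet_Ici
      fun _ hx ↦ gaussianPDFReal_le_exp_mul_gaussianPDFReal hμb hx
  _ = exp (-(b - μ) ^ 2 / (2 * v)) / 2 := by
    rw [integral_const_mul, ← gaussianReal_real_eq_integral b hv, gaussianReal_real_Ici_self b hv,
      mul_one_div]

lemma gaussianPDFReal_mul_exp (μ : ℝ) (v : ℝ≥0) (x : ℝ) :
    gaussianPDFReal μ v x * exp x = exp (μ + v / 2) * gaussianPDFReal (μ + v) v x := by
  rcases eq_or_ne v 0 with rfl | hv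
  · simp [gaussianPDFReal_zero_var]
  have hv' : (v : ℝ) ≠ 0 := by exact_mod_cast hv
  simp only [gaussianPDFReal]
  have hexp : -(x - μ) ^ 2 / (2 * v) + x = μ + v / 2 + -(x - (μ + v)) ^ 2 / (2 * v) := by
    field_simp
    ring
  rw [mul_assoc, ← exp_add, hexp, exp_add]
  ring

lemma setIntegral_exp_gaussianReal (μ : ℝ) (hv : v ≠ 0) {s : Set ℝ} (hs : MeasurableSet s) :
    ∫ x in s, exp x ∂gaussianReal μ v = exp (μ + v / 2) * (gaussianReal (μ + v) v).real s := by
  calc ∫ x in s, exp x ∂gaussianReal μ v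
      = ∫ x, gaussianPDFReal μ v x • s.indicator exp x := by
        rw [← integral_indicator hs, integral_gaussianReal_eq_integral_smul hv]
    _ = ∫ x in s, gaussianPDFReal μ v x * exp x := by
        rw [← integral_indicator hs]
        congr with x
        by_cases hx : x ∈ s <;> simp [hx]
    _ = exp (μ + v / 2) * (gaussianReal (μ + v) v).real s := by
        simp_rw [gaussianPDFReal_mul_exp]
        rw [integral_const_mul, gaussianReal_real_eq_integral _ hv]

end ProbabilityTheory

lemma lognormal_tail_exponent_bound {r σ t b L : ℝ} (hσ : 0 < σ) (ht : 0 < t) (hb : 0 < b)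
    (hL : 0 < L) (hL_gt : L > (4 / 5) * (1 + 2 * r / σ ^ 2) * b)
    (ht_lt : t < 8 * b ^ 2 / (25 * σ ^ 2 * L)) :
    (r + σ ^ 2 / 2) * t ≤ b ∧ 2 * L * (σ ^ 2 * t) < (b - (r + σ ^ 2 / 2) * t) ^ 2 := by
  have hvar : 25 * L * (σ ^ 2 * t) < 8 * b ^ 2 := by
    rw [lt_div_iff₀ (by positivity)] at ht_lt
    linarith
  have hdrift : 4 * (σ ^ 2 + 2 * r) * b < 5 * σ ^ 2 * L := by
    rw [show (4 / 5) * (1 + 2 * r / σ ^ 2) * b = 4 * (σ ^ 2 + 2 * r) * b / (5 * σ ^ 2) by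
      field_simp, gt_iff_lt, div_lt_iff₀ (by positivity)] at hL_gt
    linarith
  have hmean : (r + σ ^ 2 / 2) * t < b / 5 := by nlinarith
  constructor
  · linarith
  · nlinarith

theorem lognormal_upper_tail_moment_general (r σ t S₀ H ε : ℝ)
    (hσ : 0 < σ) (ht : 0 < t) (hS₀ : 0 < S₀) (hH : S₀ < H)
    (hε : ε ∈ Set.Ioo (0 : ℝ) (1 / 2))
    (hεcond : Real.log (1 / (2 * ε)) > (4 / 5) * (1 + 2 * r / σ ^ 2) * Real.log (H / S₀))
    (htcond : t < 8 * (Real.log (H / S₀)) ^ 2 / (25 * σ ^ 2 * Real.log (1 / (2 * ε)))) :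
    ∫ x in {x : ℝ | H / S₀ ≤ Real.exp x}, Real.exp x
        ∂(gaussianReal ((r - σ ^ 2 / 2) * t) (Real.toNNReal (σ ^ 2 * t)))
      < ε * Real.exp (r * t) := by
  obtain ⟨hε₀, hε_half⟩ := hε
  set b := log (H / S₀)
  set L := log (1 / (2 * ε))
  have hb : 0 < b := log_pos ((one_lt_div hS₀).2 hH)
  have hL : 0 < L := log_pos ((one_lt_div (by positivity)).2 (by linarith))
  have hV : ((σ ^ 2 * t).toNNReal : ℝ) = σ ^ 2 * t := coe_toNNReal _ (by positivity)
  have hv : (σ ^ 2 * t).toNNReal ≠ 0 := by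
    rw [← NNReal.coe_ne_zero, hV]
    positivity
  obtain ⟨hmb, hgap⟩ := lognormal_tail_exponent_bound hσ ht hb hL hεcond htcond
  have hset : {x | H / S₀ ≤ exp x} = Ici b := by
    ext x
    exact (log_le_iff_le_exp (div_pos (hS₀.trans hH) hS₀)).symm
  have hsmall : exp (-(b - (r + σ ^ 2 / 2) * t) ^ 2 / (2 * (σ ^ 2 * t))) < 2 * ε := calc
    _ < exp (-L) := by
      rw [neg_div, exp_lt_exp, neg_lt_neg_iff, lt_div_iff₀ (by positivity)]
      linarith
    _ = 2 * ε := by rw [← log_inv, one_div, inv_inv, exp_log (by positivity)]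
  rw [hset, setIntegral_exp_gaussianReal _ hv measurableSet_Ici, hV,
    show (r - σ ^ 2 / 2) * t + σ ^ 2 * t = (r + σ ^ 2 / 2) * t by ring,
    show (r - σ ^ 2 / 2) * t + σ ^ 2 * t / 2 = r * t by ring]
  calc exp (r * t) * (gaussianReal ((r + σ ^ 2 / 2) * t) (σ ^ 2 * t).toNNReal).real (Ici b)
      ≤ exp (r * t) * (exp (-(b - (r + σ ^ 2 / 2) * t) ^ 2 / (2 * (σ ^ 2 * t))) / 2) := by
        gcongr
        simpa only [hV] using gaussianReal_real_Ici_le hv hmb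
    _ < exp (r * t) * ε := by gcongr; linarith
    _ = ε * exp (r * t) := mul_comm _ _

/-- Upper-tail first-moment bound for the lognormal: if `X ~ N((r - σ²/2)t, σ²t)`,
`H > S₀ > 0`, `ε ∈ (0, 1/2)` satisfies `log(1/(2ε)) > (4/5)(1 + 2r/σ²) log(H/S₀)` and
`t < 8(log(H/S₀))²/(25σ² log(1/(2ε)))`, then `E[e^X · 1{e^X ≥ H/S₀}] < ε e^{rt}`. -/
theorem lognormal_upper_tail_moment (r σ t S₀ H ε : ℝ)
    (hσ : 0 < σ) (hr : 0 ≤ r) (ht : 0 < t) (hS₀ : 0 < S₀) (hH : S₀ < H)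
    (hε : ε ∈ Set.Ioo (0 : ℝ) (1 / 2))
    (hεcond : Real.log (1 / (2 * ε)) > (4 / 5) * (1 + 2 * r / σ ^ 2) * Real.log (H / S₀))
    (htcond : t < 8 * (Real.log (H / S₀)) ^ 2 / (25 * σ ^ 2 * Real.log (1 / (2 * ε)))) :
    ∫ x in {x : ℝ | H / S₀ ≤ Real.exp x}, Real.exp x
        ∂(gaussianReal ((r - σ ^ 2 / 2) * t) (Real.toNNReal (σ ^ 2 * t)))
      < ε * Real.exp (r * t) :=
  lognormal_upper_tail_moment_general r σ t S₀ H ε hσ ht hS₀ hH hε hεcond htcond
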